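/- arXiv:1707.03680 — 3 statements merged into one kernel-verified Lean document; each statement's English description precedes it below -/
import Mathlib

section
/- Let L be a p-special lattice. Then the degree n theta series of L, ϑ^n(L)(Z) = Σ_{x ∈ L^n} exp(2πi tr(q(x)Z)), has all non-constant Fourier coefficients divisible by p; equivalently every T ≠ 0 in the support has Fourier coefficient r(L,T) = #{x ∈ L^n : q(x) = T} divisible by p. -/
/-!
The isometry `σ` acts on the set of `x ∈ L^n` with `q(x) = T` by `x ↦ σ ∘ x`. This action has
order dividing `p`, and a fixed tuple would consist of vectors fixed by `σ`, hence be zero,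
which is impossible as `T ≠ 0`. So all orbits have size `p` and `p ∣ r(L, T)`.
-/

theorem Equiv.Perm.prime_dvd_natCard_of_fixedPointFree {α : Type*} {p n : ℕ} (hp : p.Prime)
    {f : Equiv.Perm α} (hf : f ^ p ^ n = 1) (hfree : ∀ a, f a ≠ a) : p ∣ Nat.card α := by
  cases finite_or_infinite α
  · have := Fact.mk hp
    have := Fintype.ofFinite α
    rw [Nat.card_eq_fintype_card]
    by_contra hndvd
    obtain ⟨a, ha⟩ := Equiv.Perm.exists_fixed_point_of_prime hndvd hf
    exact hfree a ha
  · simp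

namespace LinearEquiv

variable {R M ι : Type*} [CommSemiring R] [AddCommMonoid M] [Module R M]
  {B : M →ₗ[R] M →ₗ[R] R} {σ : M ≃ₗ[R] M} {P : Matrix ι ι R → Prop}

def permGramFiber (B : M →ₗ[R] M →ₗ[R] R) (σ : M ≃ₗ[R] M)
    (hσ : ∀ x y, B (σ x) (σ y) = B x y) (P : Matrix ι ι R → Prop) :
    Equiv.Perm {x : ι → M // P (Matrix.of fun i j => B (x i) (x j))} :=
  (Equiv.piCongrRight fun _ => σ.toEquiv).subtypeEquiv fun x => by simp [hσ]

theorem permGramFiber_pow_apply (hσ : ∀ x y, B (σ x) (σ y) = B x y) (k : ℕ)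
    (x : {x : ι → M // P (Matrix.of fun i j => B (x i) (x j))}) :
    ((σ.permGramFiber B hσ P ^ k) x : ι → M) = fun i => (σ ^ k) (x.1 i) := by
  induction k with
  | zero => rfl
  | succ k ih =>
    funext i
    rw [pow_succ', Equiv.Perm.mul_apply, pow_succ', LinearEquiv.mul_apply, ← congrFun ih i]
    rfl

theorem permGramFiber_pow_eq_one (hσ : ∀ x y, B (σ x) (σ y) = B x y) {k : ℕ}
    (hk : σ ^ k = 1) : σ.permGramFiber B hσ P ^ k = 1 := by
  ext x i
  simp [permGramFiber_pow_apply, hk]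

theorem permGramFiber_apply_ne (hσ : ∀ x y, B (σ x) (σ y) = B x y)
    (hfix : ∀ x, σ x = x → x = 0) (hP : ¬P 0)
    (x : {x : ι → M // P (Matrix.of fun i j => B (x i) (x j))}) :
    σ.permGramFiber B hσ P x ≠ x := by
  intro hx
  have hx0 : x.1 = 0 := funext fun i => hfix _ (congrFun (congrArg Subtype.val hx) i)
  apply hP
  convert x.2
  ext i j
  simp [hx0]

end LinearEquiv

theorem theta_series_of_p_special_lattice_congruent_one_general
    (p : ℕ) (hp : p.Prime)
    (L : Type*) [AddCommGroup L] [Module ℤ L]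
    (B : L →ₗ[ℤ] L →ₗ[ℤ] ℤ)
    (σ : L ≃ₗ[ℤ] L)
    (hiso : ∀ x y : L, B (σ x) (σ y) = B x y)
    (horder : σ ^ p = 1)
    (hfix : ∀ x : L, σ x = x → x = 0) :
    ∀ (n : ℕ) (T : Matrix (Fin n) (Fin n) ℚ), T ≠ 0 →
      p ∣ Nat.card {x : Fin n → L // ∀ i j, ((B (x i) (x j) : ℤ) : ℚ) = 2 * T i j} := by
  intro n T hT
  let P : Matrix (Fin n) (Fin n) ℤ → Prop := fun G => ∀ i j, (G i j : ℚ) = 2 * T i j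
  have hP0 : ¬P 0 := fun h0 => hT <| Matrix.ext fun i j => by simpa using (h0 i j).symm
  exact Equiv.Perm.prime_dvd_natCard_of_fixedPointFree (n := 1) (f := σ.permGramFiber B hiso P) hp
    (LinearEquiv.permGramFiber_pow_eq_one hiso (by rwa [pow_one]))
    (LinearEquiv.permGramFiber_apply_ne hiso hfix hP0)

/-- Let `L` be a `p`-special lattice (`p` an odd prime). Then every non-constant
Fourier coefficient of the degree `n` theta series `ϑ^n(L)` is divisible by `p`:
for every `T ≠ 0`, `p` divides `r(L,T) = #{x ∈ L^n : q(x) = T}`, where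
`q(x)_{ij} = B(x_i, x_j)/2`. -/
theorem theta_series_of_p_special_lattice_congruent_one
    (p : ℕ) (hp : p.Prime) (hodd : Odd p)
    (L : Type*) [AddCommGroup L] [Module ℤ L] [Module.Free ℤ L] [Module.Finite ℤ L]
    (B : L →ₗ[ℤ] L →ₗ[ℤ] ℤ)
    (hsymm : ∀ x y : L, B x y = B y x)
    (hpos : ∀ x : L, x ≠ 0 → 0 < B x x)
    (heven : ∀ x : L, Even (B x x))
    (σ : L ≃ₗ[ℤ] L)
    (hiso : ∀ x y : L, B (σ x) (σ y) = B x y)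
    (horder : σ ^ p = 1) (hne : σ ≠ 1)
    (hfix : ∀ x : L, σ x = x → x = 0) :
    ∀ (n : ℕ) (T : Matrix (Fin n) (Fin n) ℚ), T ≠ 0 →
      p ∣ Nat.card {x : Fin n → L // ∀ i j, ((B (x i) (x j) : ℤ) : ℚ) = 2 * T i j} :=
  theta_series_of_p_special_lattice_congruent_one_general p hp L B σ hiso horder hfix
end

section
/- An even positive definite integral matrix S of rank n with squarefree determinant corresponds to a maximal lattice: the lattice Z^n with quadratic form x ↦ (1/2) x^T S x admits no proper integral overlattice. -/
/-!
If `L'` is an even overlattice of `ℤⁿ`, polarization shows that `S` maps `L'` into `ℤⁿ`, hence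
`(det S) • L' ⊆ ℤⁿ`, and it suffices to show that `y ∈ L'` with `p • y ∈ ℤⁿ` for a prime `p` lies
in `ℤⁿ`. For `a = p • y` we have `S a ≡ 0 (mod p)` and `aᵀ S a ≡ 0 (mod p²)`. If some `aᵢ` is prime
to `p`, replacing `eᵢ` by `a` in the standard basis gives a Gram matrix `Pᵀ S P` whose `i`-th row
and column are divisible by `p` and whose `(i, i)` entry is divisible by `p²`; hence
`p² ∣ aᵢ² det S`, so `p² ∣ det S`, contradicting squarefreeness.
-/

open Matrix

def stdLattice (n : ℕ) : Submodule ℤ (Fin n → ℚ) :=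
  Submodule.span ℤ (Set.range fun i : Fin n => (Pi.single i 1 : Fin n → ℚ))

namespace Matrix

variable {ι R : Type*} [Fintype ι] [CommRing R]

theorem IsSymm.dotProduct_mulVec_comm {A : Matrix ι ι R} (hA : A.IsSymm) (x y : ι → R) :
    x ⬝ᵥ A *ᵥ y = y ⬝ᵥ A *ᵥ x := by
  rw [dotProduct_mulVec, ← mulVec_transpose, hA.eq, dotProduct_comm]

theorem IsSymm.add_dotProduct_mulVec_add {A : Matrix ι ι R} (hA : A.IsSymm) (x y : ι → R) :
    (x + y) ⬝ᵥ A *ᵥ (x + y) = x ⬝ᵥ A *ᵥ x + 2 * (y ⬝ᵥ A *ᵥ x) + y ⬝ᵥ A *ᵥ y := by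
  rw [mulVec_add, add_dotProduct, dotProduct_add, dotProduct_add, hA.dotProduct_mulVec_comm x y]
  ring

variable [DecidableEq ι]

theorem sq_dvd_det_of_dvd_row_of_dvd_col (T : Matrix ι ι R) {p : R} {i₀ : ι}
    (hrow : ∀ j, p ∣ T i₀ j) (hcol : ∀ i, p ∣ T i i₀) (hcorner : p ^ 2 ∣ T i₀ i₀) :
    p ^ 2 ∣ T.det := by
  set d : ι → R := Pi.mulSingle i₀ p
  have hfactor : ∀ i j, ∃ c, T i j = d i * c * d j := by
    intro i j
    by_cases hi : i = i₀ <;> by_cases hj : j = i₀ <;> subst_vars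
    · obtain ⟨c, hc⟩ := hcorner
      exact ⟨c, by simp only [d, hc, Pi.mulSingle_eq_same]; ring⟩
    · obtain ⟨c, hc⟩ := hrow j
      exact ⟨c, by simp [d, hc, hj]⟩
    · obtain ⟨c, hc⟩ := hcol i
      exact ⟨c, by simp only [d, hc, Pi.mulSingle_eq_same, Pi.mulSingle_eq_of_ne hi]; ring⟩
    · exact ⟨T i j, by simp [d, hi, hj]⟩
  choose T' hT' using hfactor
  have hT : T = diagonal d * of T' * diagonal d := by
    ext i j
    simp [hT']
  rw [hT, det_mul, det_mul, det_diagonal, Fintype.prod_pi_mulSingle']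
  exact ⟨(of T').det, by ring⟩

theorem sq_dvd_det_of_dvd_mulVec {S : Matrix ι ι R} (hS : S.IsSymm) {p : R} {a : ι → R}
    (hSa : ∀ i, p ∣ (S *ᵥ a) i) (ha : p ^ 2 ∣ a ⬝ᵥ S *ᵥ a) {i₀ : ι}
    (hcop : IsCoprime p (a i₀)) : p ^ 2 ∣ S.det := by
  set P : Matrix ι ι R := (1 : Matrix ι ι R).updateCol i₀ a
  have hP : P.det = a i₀ := by
    simpa [P, Matrix.one_apply] using det_updateCol_sum (1 : Matrix ι ι R) i₀ a
  have hPa : Pᵀ i₀ = a := by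
    ext k
    simp [P]
  have hcol : ∀ i, (Pᵀ * S * P) i i₀ = Pᵀ i ⬝ᵥ S *ᵥ a := by
    intro i
    rw [mul_apply', dotProduct_mulVec]
    congr
  have hcolp : ∀ i, p ∣ (Pᵀ * S * P) i i₀ := fun i =>
    hcol i ▸ Finset.dvd_sum fun k _ => dvd_mul_of_dvd_right (hSa k) _
  have hT : (Pᵀ * S * P).IsSymm := by
    simp [IsSymm, Matrix.mul_assoc, hS.eq]
  have hdvd : p ^ 2 ∣ a i₀ ^ 2 * S.det := by
    have := (Pᵀ * S * P).sq_dvd_det_of_dvd_row_of_dvd_col (i₀ := i₀) (p := p)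
      (fun j => hT.apply j i₀ ▸ hcolp j) hcolp (by rwa [hcol, hPa])
    rwa [det_mul, det_mul, det_transpose, hP, mul_comm, ← mul_assoc, ← sq] at this
  exact hcop.pow.dvd_of_dvd_mul_left hdvd

theorem dvd_of_dvd_mulVec_of_squarefree_det [IsDomain R] [IsBezout R] {S : Matrix ι ι R}
    (hS : S.IsSymm) (hsf : Squarefree S.det) {p : R} (hp : Prime p) {a : ι → R}
    (hSa : ∀ i, p ∣ (S *ᵥ a) i) (ha : p ^ 2 ∣ a ⬝ᵥ S *ᵥ a) (i : ι) : p ∣ a i := by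
  by_contra hpa
  have := sq_dvd_det_of_dvd_mulVec hS hSa ha ((hp.coprime_iff_not_dvd).2 hpa)
  exact hp.not_isUnit (hsf p (by rwa [← sq]))

end Matrix

theorem Submodule.mem_of_zsmul_mem_of_prime {M : Type*} [AddCommGroup M] {L L' : Submodule ℤ M}
    (hprime : ∀ p : ℕ, p.Prime → ∀ y ∈ L', (p : ℤ) • y ∈ L → y ∈ L)
    {m : ℤ} (hm : m ≠ 0) {y : M} (hy : y ∈ L') (hmy : m • y ∈ L) : y ∈ L := by
  suffices h : ∀ k : ℕ, k ≠ 0 → ∀ y ∈ L', (k : ℤ) • y ∈ L → y ∈ L by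
    obtain ⟨c, hc⟩ := Int.dvd_natAbs_self (a := m)
    refine h m.natAbs (Int.natAbs_ne_zero.2 hm) y hy ?_
    rw [hc, mul_comm, mul_smul]
    exact L.smul_mem c hmy
  intro k
  induction k using induction_on_primes with
  | zero => exact fun h => (h rfl).elim
  | one => simp
  | prime_mul p a hp ih =>
    intro hpa y hy hy'
    rw [Nat.cast_mul, mul_smul] at hy'
    exact ih (right_ne_zero_of_mul hpa) y hy
      (hprime p hp _ (L'.smul_mem _ hy) hy')

/-- `q(y) = ½ yᵀ A y` is integral on `L`. -/
def IsEvenLattice {n : ℕ} (A : Matrix (Fin n) (Fin n) ℚ) (L : Submodule ℤ (Fin n → ℚ)) : Prop :=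
  ∀ y ∈ L, ∃ k : ℤ, y ⬝ᵥ A *ᵥ y = 2 * k

theorem mem_stdLattice_iff {n : ℕ} {v : Fin n → ℚ} :
    v ∈ stdLattice n ↔ ∀ i, ∃ a : ℤ, (a : ℚ) = v i := by
  have hbasis : (fun i : Fin n => (Pi.single i 1 : Fin n → ℚ)) = Pi.basisFun ℚ (Fin n) :=
    funext fun i => (Pi.basisFun_apply ℚ (Fin n) i).symm
  rw [stdLattice, hbasis, Module.Basis.mem_span_iff_repr_mem]
  simp

theorem map_intCast_mulVec_mem_stdLattice {m n : ℕ} (M : Matrix (Fin m) (Fin n) ℤ)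
    {v : Fin n → ℚ} (hv : v ∈ stdLattice n) : M.map (Int.cast : ℤ → ℚ) *ᵥ v ∈ stdLattice m := by
  choose a ha using mem_stdLattice_iff.1 hv
  obtain rfl : Int.castRingHom ℚ ∘ a = v := funext ha
  exact mem_stdLattice_iff.2 fun i => ⟨(M *ᵥ a) i, (Int.castRingHom ℚ).map_mulVec M a i⟩

theorem det_smul_mem_stdLattice {n : ℕ} (S : Matrix (Fin n) (Fin n) ℤ) {y : Fin n → ℚ}
    (hy : S.map (Int.cast : ℤ → ℚ) *ᵥ y ∈ stdLattice n) : S.det • y ∈ stdLattice n := by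
  have hadj : S.adjugate.map (Int.castRingHom ℚ) *ᵥ (S.map (Int.castRingHom ℚ) *ᵥ y) =
      S.det • y := by
    rw [mulVec_mulVec, ← Matrix.map_mul, adjugate_mul, Matrix.map_smul, Matrix.map_one,
      smul_mulVec, one_mulVec] <;> simp
  rw [Int.coe_castRingHom] at hadj
  exact hadj ▸ map_intCast_mulVec_mem_stdLattice _ hy

theorem mulVec_mem_stdLattice_of_isEvenLattice {n : ℕ} {A : Matrix (Fin n) (Fin n) ℚ}
    (hA : A.IsSymm) {L : Submodule ℤ (Fin n → ℚ)} (hle : stdLattice n ≤ L)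
    (heven : IsEvenLattice A L) {y : Fin n → ℚ} (hy : y ∈ L) : A *ᵥ y ∈ stdLattice n := by
  refine mem_stdLattice_iff.2 fun i => ?_
  have hei : Pi.single i 1 ∈ L := hle (Submodule.subset_span ⟨i, rfl⟩)
  obtain ⟨k, hk⟩ := heven _ (L.add_mem hy hei)
  obtain ⟨k₁, hk₁⟩ := heven y hy
  obtain ⟨k₂, hk₂⟩ := heven _ hei
  rw [hA.add_dotProduct_mulVec_add, hk₁, hk₂, single_dotProduct, one_mul] at hk
  exact ⟨k - k₁ - k₂, by push_cast; linarith⟩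

theorem mem_stdLattice_of_prime_smul_mem {n : ℕ} {S : Matrix (Fin n) (Fin n) ℤ} (hS : S.IsSymm)
    (hsf : Squarefree S.det) {L : Submodule ℤ (Fin n → ℚ)} (hle : stdLattice n ≤ L)
    (heven : IsEvenLattice (S.map Int.cast) L) {p : ℕ} (hp : p.Prime) {y : Fin n → ℚ}
    (hy : y ∈ L) (hpy : (p : ℤ) • y ∈ stdLattice n) : y ∈ stdLattice n := by
  set f := Int.castRingHom ℚ
  choose a ha using mem_stdLattice_iff.1 hpy
  have hfa : f ∘ a = (p : ℚ) • y := by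
    ext i
    simpa using ha i
  choose b hb using mem_stdLattice_iff.1
    (mulVec_mem_stdLattice_of_isEvenLattice (hS.map _) hle heven hy)
  obtain ⟨k, hk⟩ := heven y hy
  have hSa : ∀ i, (p : ℤ) ∣ (S *ᵥ a) i := by
    refine fun i => ⟨b i, Int.cast_injective (α := ℚ) ?_⟩
    rw [← eq_intCast f, f.map_mulVec, hfa, mulVec_smul]
    simp [f, hb]
  have hq : (p : ℤ) ^ 2 ∣ a ⬝ᵥ S *ᵥ a := by
    refine ⟨2 * k, Int.cast_injective (α := ℚ) ?_⟩
    have hSfa : f ∘ (S *ᵥ a) = S.map f *ᵥ (f ∘ a) := funext (f.map_mulVec S a)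
    rw [← eq_intCast f, f.map_dotProduct, hSfa, hfa, mulVec_smul]
    simp only [f, Int.coe_castRingHom, dotProduct_smul, smul_dotProduct, hk, smul_eq_mul,
      Int.cast_mul, Int.cast_pow, Int.cast_natCast, Int.cast_ofNat]
    ring
  refine mem_stdLattice_iff.2 fun i => ?_
  obtain ⟨c, hc⟩ :=
    dvd_of_dvd_mulVec_of_squarefree_det hS hsf (Nat.prime_iff_prime_int.1 hp) hSa hq i
  refine ⟨c, mul_left_cancel₀ (Nat.cast_ne_zero.2 hp.ne_zero : (p : ℚ) ≠ 0) ?_⟩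
  simpa [hc, eq_comm] using ha i

theorem squarefree_det_is_maximal_general
    (n : ℕ) (S : Matrix (Fin n) (Fin n) ℤ)
    (hsymm : Sᵀ = S)
    (hsf : Squarefree S.det) :
    ∀ L' : Submodule ℤ (Fin n → ℚ), stdLattice n ≤ L' →
      (∀ y ∈ L', ∃ k : ℤ,
        dotProduct y ((S.map (Int.cast : ℤ → ℚ)).mulVec y) = 2 * (k : ℚ)) →
      L' = stdLattice n := by
  intro L' hle heven
  refine le_antisymm (fun y hy => ?_) hle
  have hSy := mulVec_mem_stdLattice_of_isEvenLattice (IsSymm.map hsymm _) hle heven hy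
  exact Submodule.mem_of_zsmul_mem_of_prime
    (fun p hp y hy => mem_stdLattice_of_prime_smul_mem hsymm hsf hle heven hp hy)
    hsf.ne_zero hy (det_smul_mem_stdLattice S hSy)

/-- An even positive definite integral matrix `S` of rank `n` with squarefree
determinant corresponds to a maximal lattice: the lattice `ℤ^n` with quadratic form
`x ↦ (1/2) xᵀ S x` admits no proper integral overlattice. -/
theorem squarefree_det_is_maximal
    (n : ℕ) (S : Matrix (Fin n) (Fin n) ℤ)
    (hsymm : Sᵀ = S)
    (heven : ∀ i, Even (S i i))
    (hpos : ∀ v : Fin n → ℚ, v ≠ 0 →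
      0 < dotProduct v ((S.map (Int.cast : ℤ → ℚ)).mulVec v))
    (hsf : Squarefree S.det) :
    ∀ L' : Submodule ℤ (Fin n → ℚ), stdLattice n ≤ L' →
      (∀ y ∈ L', ∃ k : ℤ,
        dotProduct y ((S.map (Int.cast : ℤ → ℚ)).mulVec y) = 2 * (k : ℚ)) →
      L' = stdLattice n :=
  squarefree_det_is_maximal_general n S hsymm hsf
end

section
/- Let p be a prime with p ≡ 3 mod 4, p > 3. The set B_{−p}/SL(2,Z) of SL(2,Z)-classes of positive definite integral binary quadratic forms of discriminant −p contains exactly one ambiguous class, i.e. exactly one class fixed under the GL(2,Z)-action by an element of determinant −1. -/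
open Matrix

/-- Positive definiteness of the binary quadratic form `ax² + bxy + cy²`. -/
def PosDefBQF (a b c : ℤ) : Prop :=
  ∀ x y : ℚ, ¬(x = 0 ∧ y = 0) → 0 < (a : ℚ) * x ^ 2 + (b : ℚ) * x * y + (c : ℚ) * y ^ 2

/-- The even Gram matrix of the binary quadratic form `ax² + bxy + cy²`. -/
def gram (a b c : ℤ) : Matrix (Fin 2) (Fin 2) ℤ := !![2 * a, b; b, 2 * c]

/-- Membership in `B_{-p}`: positive definite integral binary forms of
discriminant `-p`. -/
def InBD (p : ℕ) (f : ℤ × ℤ × ℤ) : Prop :=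
  PosDefBQF f.1 f.2.1 f.2.2 ∧ f.2.1 ^ 2 - 4 * f.1 * f.2.2 = -(p : ℤ)

/-- Proper (`SL(2,ℤ)`) equivalence of binary quadratic forms. -/
def SL2Equiv (f g : ℤ × ℤ × ℤ) : Prop :=
  ∃ U : Matrix.SpecialLinearGroup (Fin 2) ℤ,
    (U : Matrix (Fin 2) (Fin 2) ℤ)ᵀ * gram f.1 f.2.1 f.2.2 * (U : Matrix (Fin 2) (Fin 2) ℤ) =
      gram g.1 g.2.1 g.2.2

/-- A form is ambiguous iff its class coincides with its image under a determinant
`-1` change of variables, i.e. the form admits an improper automorphism. -/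
def Ambiguous (f : ℤ × ℤ × ℤ) : Prop :=
  ∃ U : Matrix (Fin 2) (Fin 2) ℤ, U.det = -1 ∧
    Uᵀ * gram f.1 f.2.1 f.2.2 * U = gram f.1 f.2.1 f.2.2


/-!
An improper automorphism `U` of a form with `a ≠ 0` has trace zero, so it is an involution of
determinant `-1`. It fixes a primitive vector `v`, and in a basis `(v, w)` of `ℤ²` it becomes a
reflection `(x, y) ↦ (x + σ y, -y)`; in that basis the form is `A x² + B xy + C y²` with `B = A σ`.
For discriminant `-p` the integer `σ` is odd (otherwise `4 ∣ p`), so a translation makes `B = A`,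
whence `A (4C - A) = p` and `A ∈ {1, p}`. Both `(1, 1, q)` and `(p, p, q)`, where `4q = p + 1`,
are properly equivalent to the principal form `x² + xy + q y²`, which is itself ambiguous.
-/

lemma gram_transform (a b c r s t u : ℤ) :
    (!![r, s; t, u])ᵀ * _root_.gram a b c * !![r, s; t, u] =
      _root_.gram (a * r ^ 2 + b * r * t + c * t ^ 2)
        (2 * a * r * s + b * (r * u + s * t) + 2 * c * t * u) (a * s ^ 2 + b * s * u + c * u ^ 2) := by
  ext i j
  fin_cases i <;> fin_cases j <;>
    simp [_root_.gram, Matrix.mul_apply, Fin.sum_univ_two] <;> ring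

lemma eq_of_gram_eq {a b c a' b' c' : ℤ} (h : _root_.gram a b c = _root_.gram a' b' c') :
    a = a' ∧ b = b' ∧ c = c' := by
  have h00 := congrFun (congrFun h 0) 0
  have h01 := congrFun (congrFun h 0) 1
  have h11 := congrFun (congrFun h 1) 1
  simp only [_root_.gram, of_apply, cons_val', cons_val_zero, cons_val_one, empty_val',
    cons_val_fin_one] at h00 h01 h11
  exact ⟨by omega, h01, by omega⟩

lemma sl2Equiv_iff {a b c A B C : ℤ} :
    SL2Equiv (a, b, c) (A, B, C) ↔ ∃ r s t u : ℤ, r * u - s * t = 1 ∧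
      A = a * r ^ 2 + b * r * t + c * t ^ 2 ∧
      B = 2 * a * r * s + b * (r * u + s * t) + 2 * c * t * u ∧
      C = a * s ^ 2 + b * s * u + c * u ^ 2 := by
  constructor
  · rintro ⟨U, hU⟩
    have hdet := U.2
    rw [eta_fin_two (U : Matrix (Fin 2) (Fin 2) ℤ), det_fin_two_of] at hdet
    rw [eta_fin_two (U : Matrix (Fin 2) (Fin 2) ℤ), gram_transform] at hU
    obtain ⟨hA, hB, hC⟩ := eq_of_gram_eq hU
    exact ⟨_, _, _, _, hdet, hA.symm, hB.symm, hC.symm⟩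
  · rintro ⟨r, s, t, u, hdet, rfl, rfl, rfl⟩
    exact ⟨⟨!![r, s; t, u], by rwa [det_fin_two_of]⟩, gram_transform a b c r s t u⟩

namespace SL2Equiv

lemma symm {f g : ℤ × ℤ × ℤ} (h : SL2Equiv f g) : SL2Equiv g f := by
  obtain ⟨U, hU⟩ := h
  refine ⟨U⁻¹, ?_⟩
  have hinv : ((U * U⁻¹ : SpecialLinearGroup (Fin 2) ℤ) : Matrix (Fin 2) (Fin 2) ℤ) = 1 := by
    rw [mul_inv_cancel]; rfl
  rw [Matrix.SpecialLinearGroup.coe_mul] at hinv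
  rw [← hU]
  calc (↑U⁻¹ : Matrix (Fin 2) (Fin 2) ℤ)ᵀ * ((↑U)ᵀ * _root_.gram f.1 f.2.1 f.2.2 * ↑U) * ↑U⁻¹
      = (↑U * ↑U⁻¹ : Matrix (Fin 2) (Fin 2) ℤ)ᵀ * _root_.gram f.1 f.2.1 f.2.2 * (↑U * ↑U⁻¹) := by
        simp only [transpose_mul, Matrix.mul_assoc]
    _ = _root_.gram f.1 f.2.1 f.2.2 := by rw [hinv, transpose_one, Matrix.one_mul, Matrix.mul_one]

lemma trans {f g h : ℤ × ℤ × ℤ} (hfg : SL2Equiv f g) (hgh : SL2Equiv g h) :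
    SL2Equiv f h := by
  obtain ⟨U, hU⟩ := hfg
  obtain ⟨W, hW⟩ := hgh
  refine ⟨U * W, ?_⟩
  rw [Matrix.SpecialLinearGroup.coe_mul, ← hW, ← hU]
  simp only [transpose_mul, Matrix.mul_assoc]

end SL2Equiv

lemma sl2Equiv_translate (a b c k : ℤ) :
    SL2Equiv (a, b, c) (a, b + 2 * a * k, a * k ^ 2 + b * k + c) :=
  sl2Equiv_iff.mpr ⟨1, k, 0, 1, by ring, by ring, by ring, by ring⟩

lemma PosDefBQF.eval_pos {a b c : ℤ} (h : PosDefBQF a b c) {x y : ℤ} (hxy : ¬(x = 0 ∧ y = 0)) :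
    0 < a * x ^ 2 + b * x * y + c * y ^ 2 := by
  have := h x y (by exact_mod_cast hxy)
  exact_mod_cast this

lemma posDefBQF_of_pos_of_disc_neg {a b c : ℤ} (ha : 0 < a) (hd : b ^ 2 - 4 * a * c < 0) :
    PosDefBQF a b c := by
  intro x y hxy
  have ha' : (0 : ℚ) < a := by exact_mod_cast ha
  have hd' : (b : ℚ) ^ 2 - 4 * a * c < 0 := by exact_mod_cast hd
  rcases eq_or_ne y 0 with rfl | hy
  · have hx : x ≠ 0 := by tauto
    have : 0 < x ^ 2 := by positivity
    nlinarith
  · have hy2 : 0 < y ^ 2 := by positivity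
    nlinarith [sq_nonneg (2 * (a : ℚ) * x + b * y)]

lemma InBD.fst_pos {p : ℕ} {f : ℤ × ℤ × ℤ} (hf : InBD p f) : 0 < f.1 := by
  simpa using hf.1.eval_pos (x := 1) (y := 0) (by simp)

lemma SL2Equiv.inBD {p : ℕ} {a b c A B C : ℤ} (h : SL2Equiv (a, b, c) (A, B, C))
    (hf : InBD p (a, b, c)) : InBD p (A, B, C) := by
  obtain ⟨r, s, t, u, hdet, rfl, rfl, rfl⟩ := sl2Equiv_iff.mp h
  obtain ⟨hpos, hdisc⟩ := hf
  refine ⟨fun x y hxy => ?_, ?_⟩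
  · have hdet' : (r : ℚ) * u - s * t = 1 := by exact_mod_cast hdet
    have hne : ¬(r * x + s * y = 0 ∧ t * x + u * y = 0) := by
      rintro ⟨h1, h2⟩
      exact hxy ⟨by linear_combination u * h1 - s * h2 - x * hdet',
        by linear_combination r * h2 - t * h1 - y * hdet'⟩
    convert hpos _ _ hne using 1
    push_cast
    ring
  · dsimp only at hdisc ⊢
    linear_combination (r * u - s * t + 1) * (b ^ 2 - 4 * a * c) * hdet + hdisc

lemma trace_eq_zero_of_improper_automorph {a b c r s t u : ℤ} (ha : a ≠ 0)
    (hdet : r * u - s * t = -1)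
    (h : (!![r, s; t, u])ᵀ * _root_.gram a b c * !![r, s; t, u] = _root_.gram a b c) :
    r + u = 0 := by
  rw [gram_transform] at h
  obtain ⟨h₁, h₂, -⟩ := eq_of_gram_eq h
  have : 2 * a * (r + u) = 0 := by
    linear_combination (-2 * u) * h₁ + t * h₂ + (b * t + 2 * a * r) * hdet
  simpa [ha] using this

/-- An integral involution of determinant `-1` fixes a primitive vector. -/
lemma exists_isCoprime_fixed {r s t : ℤ} (h : r ^ 2 + s * t = 1) :
    ∃ v₁ v₂ : ℤ, IsCoprime v₁ v₂ ∧ r * v₁ + s * v₂ = v₁ ∧ t * v₁ - r * v₂ = v₂ := by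
  obtain ⟨w₁, w₂, hw, h₁, h₂⟩ : ∃ w₁ w₂ : ℤ,
      (w₁ ≠ 0 ∨ w₂ ≠ 0) ∧ r * w₁ + s * w₂ = w₁ ∧ t * w₁ - r * w₂ = w₂ := by
    by_cases hr : r = -1
    · exact ⟨s, 1 - r, Or.inr (by omega), by ring, by linear_combination h⟩
    · exact ⟨r + 1, t, Or.inl (by omega), by linear_combination h, by ring⟩
  obtain ⟨g, v₁, v₂, hg, hcop, rfl, rfl⟩ := Int.exists_gcd_one' (Int.gcd_pos_iff.mpr hw)
  have hg' : (g : ℤ) ≠ 0 := by exact_mod_cast hg.ne'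
  exact ⟨v₁, v₂, Int.isCoprime_iff_gcd_eq_one.mpr hcop,
    mul_right_cancel₀ hg' (by linear_combination h₁),
    mul_right_cancel₀ hg' (by linear_combination h₂)⟩

/-- Completing the fixed vector `(v₁, v₂)` to a basis conjugates the involution into a
reflection `(x, y) ↦ (x + σ y, -y)`. -/
lemma involution_mul_eq_mul_reflection {r s t v₁ v₂ x y : ℤ} (hxy : x * v₁ + y * v₂ = 1)
    (h₁ : r * v₁ + s * v₂ = v₁) (h₂ : t * v₁ - r * v₂ = v₂) :
    !![r, s; t, -r] * !![v₁, -y; v₂, x] =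
      !![v₁, -y; v₂, x] * !![1, s * x ^ 2 - t * y ^ 2 - 2 * r * x * y; 0, -1] := by
  ext i j
  fin_cases i <;> fin_cases j <;> simp [Matrix.mul_apply, Fin.sum_univ_two]
  · linear_combination h₁
  · linear_combination (y - s * x + r * y) * hxy + (x * y) * h₁ + y ^ 2 * h₂
  · linear_combination h₂
  · linear_combination (-x + t * y + r * x) * hxy - x ^ 2 * h₁ - (x * y) * h₂

lemma conj_mul_conj_eq {n R : Type*} [Fintype n] [CommRing R]
    {G U V M : Matrix n n R} (hU : Uᵀ * G * U = G) (hUV : U * V = V * M) :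
    Mᵀ * (Vᵀ * G * V) * M = Vᵀ * G * V := by
  calc Mᵀ * (Vᵀ * G * V) * M = (V * M)ᵀ * G * (V * M) := by
        simp only [transpose_mul, Matrix.mul_assoc]
    _ = Vᵀ * (Uᵀ * G * U) * V := by
        rw [← hUV]
        simp only [transpose_mul, Matrix.mul_assoc]
    _ = Vᵀ * G * V := by rw [hU]

lemma eq_mul_of_reflection_automorph {A B C σ : ℤ}
    (h : (!![1, σ; 0, -1])ᵀ * _root_.gram A B C * !![1, σ; 0, -1] = _root_.gram A B C) :
    B = A * σ := by
  rw [gram_transform] at h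
  obtain ⟨-, h, -⟩ := eq_of_gram_eq h
  linarith

lemma Ambiguous.exists_sl2Equiv_dvd {a b c : ℤ} (ha : a ≠ 0) (h : Ambiguous (a, b, c)) :
    ∃ A B C : ℤ, SL2Equiv (a, b, c) (A, B, C) ∧ A ∣ B := by
  obtain ⟨U, hdet, hU⟩ := h
  obtain ⟨r, s, t, u, rfl⟩ : ∃ r s t u : ℤ, U = !![r, s; t, u] := ⟨_, _, _, _, eta_fin_two U⟩
  rw [det_fin_two_of] at hdet
  obtain rfl : u = -r := by linarith [trace_eq_zero_of_improper_automorph ha hdet hU]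
  obtain ⟨v₁, v₂, ⟨x, y, hxy⟩, h₁, h₂⟩ :=
    exists_isCoprime_fixed (by linear_combination -hdet : r ^ 2 + s * t = 1)
  have hM := conj_mul_conj_eq hU (involution_mul_eq_mul_reflection hxy h₁ h₂)
  rw [gram_transform] at hM
  exact ⟨_, _, _, sl2Equiv_iff.mpr ⟨v₁, -y, v₂, x, by linear_combination hxy, rfl, rfl, rfl⟩,
    _, eq_mul_of_reflection_automorph hM⟩

lemma exists_sl2Equiv_of_odd {A σ C : ℤ} (hσ : Odd σ) :
    ∃ C' : ℤ, SL2Equiv (A, A * σ, C) (A, A, C') := by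
  obtain ⟨k, rfl⟩ := hσ
  have h := sl2Equiv_translate A (A * (2 * k + 1)) C (-k)
  rw [show A * (2 * k + 1) + 2 * A * -k = A by ring] at h
  exact ⟨_, h⟩

lemma sl2Equiv_principal_of_dvd {p : ℕ} (hp : p.Prime) {q : ℤ} (hq : (p : ℤ) + 1 = 4 * q)
    {A B C : ℤ} (hf : InBD p (A, B, C)) (hdvd : A ∣ B) : SL2Equiv (A, B, C) (1, 1, q) := by
  obtain ⟨σ, rfl⟩ := hdvd
  have hσ : Odd σ := by
    rcases Int.even_or_odd σ with ⟨k, rfl⟩ | h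
    · obtain ⟨m, hm⟩ : ∃ m : ℤ, (p : ℤ) = 4 * m :=
        ⟨A * C - A ^ 2 * k ^ 2, by linear_combination hf.2⟩
      omega
    · exact h
  obtain ⟨C', h⟩ := exists_sl2Equiv_of_odd (C := C) hσ
  have hdisc : A * (4 * C' - A) = p := by linear_combination -(h.inBD hf).2
  have hA : A = 1 ∨ A = p := by
    lift A to ℕ using hf.fst_pos.le
    exact_mod_cast hp.eq_one_or_self_of_dvd A (by exact_mod_cast Dvd.intro _ hdisc)
  rcases hA with rfl | rfl
  · obtain rfl : C' = q := by linarith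
    simpa using h
  · have hp0 : (p : ℤ) ≠ 0 := by exact_mod_cast hp.ne_zero
    obtain rfl : C' = q := by
      have : 4 * C' - p = 1 := mul_left_cancel₀ hp0 (by linear_combination hdisc)
      linarith
    -- `(p, p, q)` takes the value `4q - p = 1` at `(1, -2)`
    exact h.trans (sl2Equiv_iff.mpr ⟨1, 1, -2, -1, by ring, by linear_combination hq,
      by linear_combination hq, by ring⟩)

lemma InBD.principal {p : ℕ} {q : ℤ} (hq : (p : ℤ) + 1 = 4 * q) : InBD p (1, 1, q) :=
  ⟨posDefBQF_of_pos_of_disc_neg (b := 1) (c := q) one_pos (by omega), by dsimp only; omega⟩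

lemma Ambiguous.principal (q : ℤ) : Ambiguous (1, 1, q) :=
  ⟨!![1, 1; 0, -1], by simp [det_fin_two_of], by rw [gram_transform]; congr 1 <;> ring⟩

theorem unique_ambiguous_class_general (p : ℕ) (hp : p.Prime) (h4 : p % 4 = 3) :
    ∃ f : ℤ × ℤ × ℤ, InBD p f ∧ Ambiguous f ∧
      ∀ g : ℤ × ℤ × ℤ, InBD p g → Ambiguous g → SL2Equiv f g := by
  obtain ⟨q, hq⟩ : ∃ q : ℤ, (p : ℤ) + 1 = 4 * q := ⟨(p + 1) / 4, by omega⟩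
  refine ⟨(1, 1, q), InBD.principal hq, Ambiguous.principal q, ?_⟩
  rintro ⟨a, b, c⟩ hg hamb
  obtain ⟨A, B, C, hequiv, hdvd⟩ := hamb.exists_sl2Equiv_dvd hg.fst_pos.ne'
  exact (sl2Equiv_principal_of_dvd hp hq (hequiv.inBD hg) hdvd).symm.trans hequiv.symm

/-- For a prime `p ≡ 3 (mod 4)`, `p > 3`, the set `B_{-p}/SL(2,ℤ)` contains exactly
one ambiguous class. -/
theorem unique_ambiguous_class (p : ℕ) (hp : p.Prime) (h4 : p % 4 = 3) (h3 : 3 < p) :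
    ∃ f : ℤ × ℤ × ℤ, InBD p f ∧ Ambiguous f ∧
      ∀ g : ℤ × ℤ × ℤ, InBD p g → Ambiguous g → SL2Equiv f g :=
  unique_ambiguous_class_general p hp h4
end
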